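/- arXiv:2605.19353 — 5 statements merged into one kernel-verified Lean document; each statement's English description precedes it below -/
import Mathlib

section
/- Let d, x, y be positive integers with x^2 - 4*d*y^2 = 1. Then gcd((x+1)/2, y) * gcd((x+1)/2, d*y) = (x+1)/2, and likewise gcd((x-1)/2, y) * gcd((x-1)/2, d*y) = (x-1)/2. -/
/-!
Writing `x = 2k + 1`, the equation becomes `(k + 1) * k = y * (d * y)`. Since consecutive
integers are coprime, each of `k + 1` and `k` is the product of its gcds with the two factors
`y` and `d * y` of the right-hand side.
-/

theorem Nat.gcd_mul_gcd_of_succ_mul_self_eq_mul {k m n : ℕ} (h : (k + 1) * k = m * n) :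
    (k + 1).gcd m * (k + 1).gcd n = k + 1 ∧ k.gcd m * k.gcd n = k := by
  have hcop : (k + 1).Coprime k := by simp
  constructor
  · rw [Nat.gcd_comm, Nat.gcd_comm (k + 1)]
    exact Nat.gcd_mul_gcd_of_coprime_of_mul_eq_mul hcop h.symm
  · rw [Nat.gcd_comm, Nat.gcd_comm k]
    exact Nat.gcd_mul_gcd_of_coprime_of_mul_eq_mul hcop.symm (by rw [← h, mul_comm])

theorem stmt_2_general (d x y : ℕ)
    (h : x ^ 2 = 4 * d * y ^ 2 + 1) :
    Nat.gcd ((x + 1) / 2) y * Nat.gcd ((x + 1) / 2) (d * y) = (x + 1) / 2 ∧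
    Nat.gcd ((x - 1) / 2) y * Nat.gcd ((x - 1) / 2) (d * y) = (x - 1) / 2 := by
  have hodd : Odd x := by
    rw [← Nat.odd_pow_iff two_ne_zero, h]
    exact ⟨2 * d * y ^ 2, by ring⟩
  obtain ⟨k, rfl⟩ := hodd
  have hkey : (k + 1) * k = y * (d * y) := by nlinarith
  have hsucc : (2 * k + 1 + 1) / 2 = k + 1 := by omega
  have hpred : (2 * k + 1 - 1) / 2 = k := by omega
  rw [hsucc, hpred]
  exact Nat.gcd_mul_gcd_of_succ_mul_self_eq_mul hkey

theorem stmt_2 (d x y : ℕ) (hd : 0 < d) (hx : 0 < x) (hy : 0 < y)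
    (h : x ^ 2 = 4 * d * y ^ 2 + 1) :
    Nat.gcd ((x + 1) / 2) y * Nat.gcd ((x + 1) / 2) (d * y) = (x + 1) / 2 ∧
    Nat.gcd ((x - 1) / 2) y * Nat.gcd ((x - 1) / 2) (d * y) = (x - 1) / 2 :=
  stmt_2_general d x y h
end

section
/- Let d, x, y be positive integers with x^2 - 4*d*y^2 = 1. In the finite abelian group G = ℤ/yℤ ⊕ ℤ/(dy)ℤ, the number of elements z with ((x+1)/2) • z = 0 equals (x+1)/2, and the number of elements z with ((x-1)/2) • z = 0 equals (x-1)/2. -/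
/-!
Write `x = 2m + 1`; then `m (m + 1) = d y²` with `m`, `m + 1` coprime. In a finite cyclic group
of order `n` exactly `gcd(n, k)` elements are killed by `k`, so the two counts are
`gcd(k, y) · gcd(k, d y)` for `k = m + 1` and `k = m`. For `k` one of two coprime factors
`k · l = d y²`, this product of gcds is `k`: it is divisible by `k` because `k ∣ y · d y`,
and it divides `gcd(k², k l) = k`.
-/

theorem IsAddCyclic.card_nsmul_eq_zero_eq_gcd (G : Type*) [AddCommGroup G] [IsAddCyclic G]
    [Finite G] (k : ℕ) : Nat.card {g : G // k • g = 0} = (Nat.card G).gcd k :=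
  IsAddCyclic.card_nsmulAddMonoidHom_ker G k

theorem Prod.card_nsmul_eq_zero (G H : Type*) [AddMonoid G] [AddMonoid H] (k : ℕ) :
    Nat.card {z : G × H // k • z = 0} =
      Nat.card {g : G // k • g = 0} * Nat.card {h : H // k • h = 0} := by
  rw [← Nat.card_prod]
  refine Nat.card_congr ((Equiv.subtypeEquivRight fun z => ?_).trans Equiv.subtypeProdEquivProd)
  simp only [Prod.ext_iff, Prod.smul_fst, Prod.smul_snd, Prod.fst_zero, Prod.snd_zero]

theorem Nat.gcd_mul_gcd_eq_self_of_coprime_of_mul_eq {a b d y : ℕ} (hab : a.Coprime b)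
    (h : a * b = d * y ^ 2) : a.gcd y * a.gcd (d * y) = a := by
  have hprod : y * (d * y) = a * b := by rw [h]; ring
  refine Nat.dvd_antisymm ?_ (Nat.dvd_gcd_mul_gcd_iff_dvd_mul.mpr (hprod ▸ dvd_mul_right a b))
  have hsq : a.gcd y * a.gcd (d * y) ∣ a * a :=
    Nat.mul_dvd_mul (gcd_dvd_left a y) (gcd_dvd_left _ _)
  have hab' : a.gcd y * a.gcd (d * y) ∣ a * b :=
    hprod ▸ Nat.mul_dvd_mul (gcd_dvd_right a y) (gcd_dvd_right _ _)
  simpa [Nat.gcd_mul_left, hab] using Nat.dvd_gcd hsq hab'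

theorem Nat.exists_eq_two_mul_add_one_of_sq_eq {x n : ℕ} (h : x ^ 2 = 4 * n + 1) :
    ∃ m, x = 2 * m + 1 ∧ (m + 1) * m = n := by
  obtain ⟨m, rfl⟩ : Odd x := by
    rw [← Nat.odd_pow_iff two_ne_zero, h]
    exact ⟨2 * n, by ring⟩
  exact ⟨m, rfl, by nlinarith⟩

theorem stmt_3_general (d x y : ℕ) (hd : 0 < d) (hy : 0 < y)
    (h : x ^ 2 = 4 * d * y ^ 2 + 1) :
    Nat.card {z : ZMod y × ZMod (d * y) // ((x + 1) / 2) • z = 0} = (x + 1) / 2 ∧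
    Nat.card {z : ZMod y × ZMod (d * y) // ((x - 1) / 2) • z = 0} = (x - 1) / 2 := by
  obtain ⟨m, rfl, hm⟩ :=
    Nat.exists_eq_two_mul_add_one_of_sq_eq (n := d * y ^ 2) (by rw [h]; ring)
  have : NeZero y := ⟨hy.ne'⟩
  have : NeZero (d * y) := ⟨(Nat.mul_pos hd hy).ne'⟩
  have hcop : (m + 1).Coprime m := by simp
  have hcard (k : ℕ) :
      Nat.card {z : ZMod y × ZMod (d * y) // k • z = 0} = k.gcd y * k.gcd (d * y) := by
    simp only [Prod.card_nsmul_eq_zero, IsAddCyclic.card_nsmul_eq_zero_eq_gcd, Nat.card_zmod,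
      Nat.gcd_comm _ k]
  rw [show (2 * m + 1 + 1) / 2 = m + 1 by omega, show (2 * m + 1 - 1) / 2 = m by omega,
    hcard, hcard]
  exact ⟨Nat.gcd_mul_gcd_eq_self_of_coprime_of_mul_eq hcop hm,
    Nat.gcd_mul_gcd_eq_self_of_coprime_of_mul_eq hcop.symm (by rw [mul_comm, hm])⟩

theorem stmt_3 (d x y : ℕ) (hd : 0 < d) (hx : 0 < x) (hy : 0 < y)
    (h : x ^ 2 = 4 * d * y ^ 2 + 1) :
    Nat.card {z : ZMod y × ZMod (d * y) // ((x + 1) / 2) • z = 0} = (x + 1) / 2 ∧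
    Nat.card {z : ZMod y × ZMod (d * y) // ((x - 1) / 2) • z = 0} = (x - 1) / 2 :=
  stmt_3_general d x y hd hy h
end

section
/- Let m, k be positive integers such that 4*k - 1 divides 2*m + 1, set s = (2*m+1)/(4*k-1) and d = m^2 + m + k. Then (x, y) = (2*(2*m+1)*s + 1, 2*s) satisfies x^2 - 4*d*y^2 = 1. -/
/-! If `n = q * s` and `4 d = n² + q`, then `(2 n s + 1)² = 4 n² s² + 4 q s² + 1 = 4 d (2 s)² + 1`.
Here `n = 2m + 1`, `q = 4k - 1`, and indeed `4 (m² + m + k) = (2m + 1)² + (4k - 1)`. -/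

theorem pell_solution_of_eq_mul {R : Type*} [CommSemiring R] {n q s d : R}
    (hn : n = q * s) (hd : 4 * d = n ^ 2 + q) :
    (2 * n * s + 1) ^ 2 = 4 * d * (2 * s) ^ 2 + 1 := by
  rw [show 4 * d * (2 * s) ^ 2 = 4 * (4 * d) * s ^ 2 by ring, hd, hn]
  ring

theorem four_mul_sq_add_add_eq (m k : ℕ) (hk : 0 < k) :
    4 * (m ^ 2 + m + k) = (2 * m + 1) ^ 2 + (4 * k - 1) := by
  have : (2 * m + 1) ^ 2 = 4 * m ^ 2 + 4 * m + 1 := by ring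
  omega

theorem stmt_7_general (m k : ℕ)
    (hdvd : 4 * k - 1 ∣ 2 * m + 1) :
    (2 * (2 * m + 1) * ((2 * m + 1) / (4 * k - 1)) + 1) ^ 2 =
      4 * (m ^ 2 + m + k) * (2 * ((2 * m + 1) / (4 * k - 1))) ^ 2 + 1 := by
  obtain ⟨s, hs⟩ := hdvd
  have hq : 0 < 4 * k - 1 := Nat.pos_of_ne_zero fun h => by simp [h] at hs
  rw [hs, Nat.mul_div_cancel_left s hq, ← hs]
  exact pell_solution_of_eq_mul hs (four_mul_sq_add_add_eq m k (by omega))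

theorem stmt_7 (m k : ℕ) (hm : 0 < m) (hk : 0 < k)
    (hdvd : 4 * k - 1 ∣ 2 * m + 1) :
    (2 * (2 * m + 1) * ((2 * m + 1) / (4 * k - 1)) + 1) ^ 2 =
      4 * (m ^ 2 + m + k) * (2 * ((2 * m + 1) / (4 * k - 1))) ^ 2 + 1 :=
  stmt_7_general m k hdvd
end

section
/- Let m, k be positive integers such that 4*k + 1 divides 2*m - 1, set s = (2*m-1)/(4*k+1) and d = m^2 - m - k, and assume d ≥ 1. Then (x, y) = (2*(2*m-1)*s - 1, 2*s) satisfies x^2 - 4*d*y^2 = 1. -/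
/-!
With `a = 2m - 1` and `c = 4k + 1` one has `a² = 4d + c`, so for `a = c s`
`(2as - 1)² - 4d(2s)² = 4s²(a² - 4d) - 4as + 1 = 4cs² - 4cs² + 1 = 1`.
-/

theorem pell_solution_of_sq_eq {R : Type*} [CommRing R] {a c d s : R}
    (ha : a = c * s) (hsq : a ^ 2 = 4 * d + c) :
    (2 * a * s - 1) ^ 2 = 4 * d * (2 * s) ^ 2 + 1 := by
  linear_combination (4 * s ^ 2) * hsq - 4 * s * ha

theorem stmt_8_general (m k : ℕ) (hm : 0 < m)
    (hdvd : 4 * k + 1 ∣ 2 * m - 1) :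
    (2 * (2 * m - 1) * ((2 * m - 1) / (4 * k + 1)) - 1) ^ 2 =
      4 * (m ^ 2 - m - k) * (2 * ((2 * m - 1) / (4 * k + 1))) ^ 2 + 1 := by
  have hle : 4 * k + 1 ≤ 2 * m - 1 := Nat.le_of_dvd (by omega) hdvd
  obtain ⟨s, hs⟩ := hdvd
  rw [hs, Nat.mul_div_cancel_left _ (by positivity), ← hs]
  have hs_pos : 1 ≤ s := Nat.one_le_iff_ne_zero.mpr (by rintro rfl; omega)
  -- `4k + 1 ≤ 2m - 1` gives `k ≤ m - 1 ≤ m² - m`, so none of the subtractions truncates.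
  have hm_le : m - 1 ≤ m ^ 2 - m := by
    rw [sq, ← Nat.mul_sub_one]
    exact Nat.le_mul_of_pos_left _ hm
  have hx : 1 ≤ 2 * (2 * m - 1) * s := by nlinarith
  zify [hx, (by omega : 1 ≤ 2 * m), Nat.le_self_pow two_ne_zero m,
    (by omega : k ≤ m ^ 2 - m)] at hs ⊢
  exact pell_solution_of_sq_eq hs (by ring)

theorem stmt_8 (m k : ℕ) (hm : 0 < m) (hk : 0 < k)
    (hdvd : 4 * k + 1 ∣ 2 * m - 1) (hd : 1 ≤ m ^ 2 - m - k) :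
    (2 * (2 * m - 1) * ((2 * m - 1) / (4 * k + 1)) - 1) ^ 2 =
      4 * (m ^ 2 - m - k) * (2 * ((2 * m - 1) / (4 * k + 1))) ^ 2 + 1 :=
  stmt_8_general m k hm hdvd
end

section
/- Let d, x, y be positive integers with x^2 - 4*d*y^2 = 1 and x ≥ 3. Set A = gcd((x+1)/2, d) and B = gcd((x-1)/2, d). Then A * B = d. -/
/-!
Since `x² = 4dy² + 1`, `x = 2k + 1` is odd and `k (k + 1) = d y²`. The factors `k` and `k + 1`
are coprime, so `gcd(·, d)` is multiplicative on them, and `d ∣ k (k + 1)` gives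
`gcd(k + 1, d) · gcd(k, d) = gcd(k (k + 1), d) = d`.
-/

theorem Nat.gcd_mul_gcd_eq_of_coprime_of_dvd_mul {a b d : ℕ} (hab : a.Coprime b)
    (hd : d ∣ a * b) : Nat.gcd a d * Nat.gcd b d = d := by
  rw [Nat.gcd_comm a, Nat.gcd_comm b, ← hab.gcd_mul d, Nat.gcd_eq_left hd]

theorem exists_odd_of_sq_eq_four_mul_add_one {x n : ℕ} (h : x ^ 2 = 4 * n + 1) :
    ∃ k, x = 2 * k + 1 ∧ (k + 1) * k = n := by
  obtain ⟨k, rfl⟩ | ⟨k, rfl⟩ := Nat.even_or_odd x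
  · exfalso
    ring_nf at h
    omega
  · exact ⟨k, rfl, by nlinarith⟩

theorem stmt_11_general (d x y : ℕ)
    (h : x ^ 2 = 4 * d * y ^ 2 + 1) :
    Nat.gcd ((x + 1) / 2) d * Nat.gcd ((x - 1) / 2) d = d := by
  obtain ⟨k, rfl, hk⟩ := exists_odd_of_sq_eq_four_mul_add_one (n := d * y ^ 2) (by rw [h]; ring)
  have hhalf_succ : (2 * k + 1 + 1) / 2 = k + 1 := by omega
  have hhalf : (2 * k + 1 - 1) / 2 = k := by omega
  rw [hhalf_succ, hhalf]
  have hcop : (k + 1).Coprime k := Nat.coprime_self_add_left.mpr (Nat.coprime_one_left k)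
  exact Nat.gcd_mul_gcd_eq_of_coprime_of_dvd_mul hcop (hk ▸ Dvd.intro _ rfl)

theorem stmt_11 (d x y : ℕ) (hd : 0 < d) (hx : 3 ≤ x) (hy : 0 < y)
    (h : x ^ 2 = 4 * d * y ^ 2 + 1) :
    Nat.gcd ((x + 1) / 2) d * Nat.gcd ((x - 1) / 2) d = d :=
  stmt_11_general d x y h
end
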